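/- In any left-shifted non-preemptive single-machine schedule, the start time of every job is a slack time: it equals a release time plus the sum of processing times of some subset of jobs. -/
import Mathlib


/-- In a left-shifted non-preemptive single-machine schedule, the start time of every job is
a slack time: it equals the release time of some scheduled job plus the sum of the processing
times of some subset of the scheduled jobs. -/
theorem stmt_13 {ι : Type*} [DecidableEq ι] (J : Finset ι) (s r p : ι → ℝ)
    (hp : ∀ j ∈ J, 0 < p j)
    (hr : ∀ j ∈ J, r j ≤ s j)
    (hdisj : (J : Set ι).Pairwise fun j j' =>
      Disjoint (Set.Ico (s j) (s j + p j)) (Set.Ico (s j') (s j' + p j')))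
    (hls : ∀ j ∈ J, s j = r j ∨ ∃ j' ∈ J, j' ≠ j ∧ s j = s j' + p j') :
    ∀ j ∈ J, ∃ i ∈ J, ∃ J' ⊆ J, s j = r i + ∑ j' ∈ J', p j' := by
  suffices h : ∀ n : ℕ, ∀ j ∈ J, (J.filter (fun k => s k < s j)).card ≤ n →
      ∃ i ∈ J, ∃ J' ⊆ J.filter (fun k => s k + p k ≤ s j), s j = r i + ∑ j' ∈ J', p j' by
    intro j hj
    obtain ⟨i, hi, J', hJ', hsum⟩ := h _ j hj le_rfl
    exact ⟨i, hi, J', hJ'.trans (Finset.filter_subset _ _), hsum⟩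
  intro n
  induction n with
  | zero =>
    intro j hj hcard
    rcases hls j hj with heq | ⟨j', hj', hne, heq⟩
    · exact ⟨j, hj, ∅, by simp, by simp [heq]⟩
    · exfalso
      have hlt : s j' < s j := by
        have := hp j' hj'
        linarith [heq]
      have : j' ∈ J.filter (fun k => s k < s j) := Finset.mem_filter.mpr ⟨hj', hlt⟩
      have := Finset.card_pos.mpr ⟨j', this⟩
      omega
  | succ n ih =>
    intro j hj hcard
    rcases hls j hj with heq | ⟨j', hj', hne, heq⟩
    · exact ⟨j, hj, ∅, by simp, by simp [heq]⟩
    · have hlt : s j' < s j := by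
        have := hp j' hj'
        linarith [heq]
      have hsub : J.filter (fun k => s k < s j') ⊆ (J.filter (fun k => s k < s j)).erase j' := by
        intro k hk
        rw [Finset.mem_filter] at hk
        refine Finset.mem_erase.mpr ⟨?_, Finset.mem_filter.mpr ⟨hk.1, hk.2.trans hlt⟩⟩
        rintro rfl
        exact lt_irrefl _ hk.2
      have hcard' : (J.filter (fun k => s k < s j')).card ≤ n := by
        have h1 := Finset.card_le_card hsub
        have h2 : ((J.filter (fun k => s k < s j)).erase j').card
            = (J.filter (fun k => s k < s j)).card - 1 :=
          Finset.card_erase_of_mem (Finset.mem_filter.mpr ⟨hj', hlt⟩)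
        have h3 : 0 < (J.filter (fun k => s k < s j)).card :=
          Finset.card_pos.mpr ⟨j', Finset.mem_filter.mpr ⟨hj', hlt⟩⟩
        omega
      obtain ⟨i, hi, J', hJ', hsum⟩ := ih j' hj' hcard'
      have hj'notin : j' ∉ J' := by
        intro hmem
        have h1 := (Finset.mem_filter.mp (hJ' hmem)).2
        have := hp j' hj'
        linarith
      refine ⟨i, hi, insert j' J', ?_, ?_⟩
      · intro k hk
        rcases Finset.mem_insert.mp hk with rfl | hk
        · exact Finset.mem_filter.mpr ⟨hj', by linarith [heq]⟩
        · have := Finset.mem_filter.mp (hJ' hk)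
          exact Finset.mem_filter.mpr ⟨this.1, by linarith [this.2, hp j' hj']⟩
      · rw [Finset.sum_insert hj'notin]
        rw [heq, hsum]
        ring
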